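/- In the setting of the dgl (L₁, D) built from minimal Quillen models of 2-cones, for every T ∈ 𝕃(W) the derivations [D, σ_T] and −ad_T − σ_{∂_W T} agree on 𝕃(V₀): for all S ∈ 𝕃(V₀), [D, σ_T](S) = −[T, S] − σ_{∂_W T}(S). Equivalently, D(σ_T(S)) = (−1)^{|S||T|}[S, T] − σ_{∂_W T}(S) for S ∈ 𝕃(V₀). -/

import Mathlib

universe u

/-- A graded Lie algebra over `ℚ`: a `ℤ`-graded vector space with a bilinear bracket
satisfying graded antisymmetry and the graded Jacobi identity on homogeneous elements. -/
structure GLA (Lc : Type u) [AddCommGroup Lc] [Module ℚ Lc] where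
  grade : ℤ → Submodule ℚ Lc
  internal : DirectSum.IsInternal grade
  br : Lc →ₗ[ℚ] Lc →ₗ[ℚ] Lc
  br_mem : ∀ {i j : ℤ} {x y : Lc}, x ∈ grade i → y ∈ grade j → br x y ∈ grade (i + j)
  antisymm : ∀ {i j : ℤ} {x y : Lc}, x ∈ grade i → y ∈ grade j →
      br x y = -((-1 : ℚ) ^ (i * j) • br y x)
  jacobi : ∀ {i j : ℤ} {x y : Lc} (z : Lc), x ∈ grade i → y ∈ grade j →
      br x (br y z) = br (br x y) z + (-1 : ℚ) ^ (i * j) • br y (br x z)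

namespace GLA

variable {Lc : Type u} [AddCommGroup Lc] [Module ℚ Lc]

/-- The Lie subalgebra (as a submodule closed under the bracket) generated by
a graded family of subspaces. -/
def lieSub (G : GLA Lc) (p : ℤ → Submodule ℚ Lc) : Submodule ℚ Lc :=
  sInf {q | (∀ i, p i ≤ q) ∧ ∀ x ∈ q, ∀ y ∈ q, G.br x y ∈ q}

/-- The submodule of decomposable elements of `L`: the span of all brackets. -/
def dec (G : GLA Lc) : Submodule ℚ Lc :=
  Submodule.span ℚ {x : Lc | ∃ a b : Lc, x = G.br a b}

/-- A graded Lie algebra is reduced if it vanishes in degrees `≤ 0`. -/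
def Reduced (G : GLA Lc) : Prop := ∀ i : ℤ, i ≤ 0 → G.grade i = ⊥

end GLA


section Sign

lemma upow_ne (n : ℤ) : ((-1 : ℚ) ^ n) ≠ 0 := zpow_ne_zero n (by norm_num)

lemma upow_mul_upow (m n : ℤ) : (-1 : ℚ) ^ m * (-1 : ℚ) ^ n = (-1 : ℚ) ^ (m + n) :=
  (zpow_add₀ (by norm_num) m n).symm

lemma upow_sq (n : ℤ) : (-1 : ℚ) ^ n * (-1 : ℚ) ^ n = 1 := by
  rw [upow_mul_upow]
  have : n + n = 2 * n := by ring
  rw [this, zpow_mul]; norm_num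

lemma upow_congr {m n : ℤ} (k : ℤ) (h : m = n + 2 * k) : (-1 : ℚ) ^ m = (-1 : ℚ) ^ n := by
  subst h
  rw [← upow_mul_upow, zpow_mul]
  norm_num

lemma upow_congr_neg {m n : ℤ} (k : ℤ) (h : m = n + (2 * k + 1)) :
    (-1 : ℚ) ^ m = -((-1 : ℚ) ^ n) := by
  subst h
  rw [← upow_mul_upow]
  have : ((-1 : ℚ)) ^ (2 * k + 1) = -1 := by
    rw [← upow_mul_upow, zpow_mul]
    norm_num
  rw [this]
  ring

lemma upow_neg_eq (n : ℤ) : (-1 : ℚ) ^ (-n) = (-1 : ℚ) ^ n := by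
  rcases Int.even_or_odd n with h | h
  · rw [h.neg_one_zpow, (h.neg).neg_one_zpow]
  · rw [h.neg_one_zpow, (h.neg).neg_one_zpow]

end Sign

namespace GLA

variable {Lc : Type u} [AddCommGroup Lc] [Module ℚ Lc]

lemma le_lieSub (G : GLA Lc) (p : ℤ → Submodule ℚ Lc) (i : ℤ) : p i ≤ G.lieSub p := by
  intro x hx
  rw [lieSub, Submodule.mem_sInf]
  intro q hq; exact hq.1 i hx

lemma lieSub_br (G : GLA Lc) {p : ℤ → Submodule ℚ Lc} {x y : Lc}
    (hx : x ∈ G.lieSub p) (hy : y ∈ G.lieSub p) : G.br x y ∈ G.lieSub p := by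
  rw [lieSub, Submodule.mem_sInf] at *
  intro q hq; exact hq.2 x (hx q hq) y (hy q hq)

lemma lieSub_le (G : GLA Lc) {p : ℤ → Submodule ℚ Lc} {q : Submodule ℚ Lc}
    (h1 : ∀ i, p i ≤ q) (h2 : ∀ x ∈ q, ∀ y ∈ q, G.br x y ∈ q) : G.lieSub p ≤ q :=
  sInf_le ⟨h1, h2⟩

lemma lieSub_mono (G : GLA Lc) {p p' : ℤ → Submodule ℚ Lc} (h : ∀ i, p i ≤ p' i) :
    G.lieSub p ≤ G.lieSub p' :=
  G.lieSub_le (fun i => (h i).trans (G.le_lieSub p' i)) (fun _ hx _ hy => G.lieSub_br hx hy)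

/-- Graded induction principle over a Lie subalgebra generated by graded pieces. -/
lemma graded_ind (G : GLA Lc) (p N : ℤ → Submodule ℚ Lc)
    (hpN : ∀ i, p i ≤ N i) (hNg : ∀ i, N i ≤ G.grade i)
    (hbr : ∀ i j x y, x ∈ G.grade i → x ∈ G.lieSub p → x ∈ N i →
      y ∈ G.grade j → y ∈ G.lieSub p → y ∈ N j → G.br x y ∈ N (i + j)) :
    ∀ {i : ℤ} {x : Lc}, x ∈ G.lieSub p → x ∈ G.grade i → x ∈ N i := by
  classical
  set M : ℤ → Submodule ℚ Lc := fun i => N i ⊓ G.lieSub p with hM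
  have hMg : ∀ j, M j ≤ G.grade j := fun j => inf_le_left.trans (hNg j)
  have hle : G.lieSub p ≤ ⨆ j, M j := by
    apply G.lieSub_le
    · intro i x hx
      exact Submodule.mem_iSup_of_mem i (Submodule.mem_inf.2 ⟨hpN i hx, G.le_lieSub p i hx⟩)
    · intro x hx y hy
      refine Submodule.iSup_induction M (motive := fun x => ∀ y ∈ ⨆ j, M j, G.br x y ∈ ⨆ j, M j)
        hx ?_ ?_ ?_ y hy
      · intro j x hxj y hy
        refine Submodule.iSup_induction M (motive := fun y => G.br x y ∈ ⨆ j, M j) hy ?_ ?_ ?_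
        · intro k y hyk
          refine Submodule.mem_iSup_of_mem (j + k) (Submodule.mem_inf.2 ⟨?_, ?_⟩)
          · exact hbr j k x y (hMg j hxj) hxj.2 hxj.1 (hMg k hyk) hyk.2 hyk.1
          · exact G.lieSub_br hxj.2 hyk.2
        · simp
        · intro a b ha hb
          rw [map_add]
          exact Submodule.add_mem _ ha hb
      · intro y hy
        simp
      · intro a b ha hb y hy
        have : G.br (a + b) y = G.br a y + G.br b y := by simp
        rw [this]
        exact Submodule.add_mem _ (ha y hy) (hb y hy)
  intro i x hxL hxg
  have hx2 : x ∈ ⨆ j, M j := hle hxL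
  obtain ⟨f, hf⟩ := (Submodule.mem_iSup_iff_exists_dfinsupp' M x).mp hx2
  have hfi : x - (f i : Lc) ∈ G.grade i ⊓ ⨆ j, ⨆ (_ : j ≠ i), G.grade j := by
    constructor
    · exact Submodule.sub_mem _ hxg (hMg i (f i).2)
    · have hsum : x - (f i : Lc) = ∑ j ∈ f.support.erase i, ((f j : Lc)) := by
        rw [← hf]
        by_cases hi : i ∈ f.support
        · rw [Finset.sum_erase_eq_sub hi]; rfl
        · rw [Finset.erase_eq_of_notMem hi]
          have : f i = 0 := DFinsupp.notMem_support_iff.mp hi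
          rw [this]; simp [DFinsupp.sum]
      rw [hsum]
      refine Submodule.sum_mem _ ?_
      intro j hj
      exact Submodule.mem_iSup_of_mem j (Submodule.mem_iSup_of_mem (Finset.ne_of_mem_erase hj)
        (hMg j (f j).2))
  have hbot := (G.internal.submodule_iSupIndep i).eq_bot
  rw [hbot] at hfi
  have hx0 : x = (f i : Lc) := by
    have h0 : x - (f i : Lc) = 0 := by simpa using hfi
    have := sub_eq_zero.mp h0
    exact this
  rw [hx0]
  exact ((le_refl (M i)).trans inf_le_left : M i ≤ N i) (f i).2

end GLA
/-- Lemma 3.4(ii) and Remark 3.5(iv).  In the dgl `(L₁, D)` built from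
minimal Quillen models of 2-cones, for every homogeneous `T ∈ 𝕃(W)` the derivations
`[D, σ_T]` and `-ad_T - σ_{∂_W T}` agree on `𝕃(V₀)`:
`[D, σ_T](S) = -[T, S] - σ_{∂_W T}(S)`; equivalently
`D(σ_T(S)) = (-1)^{|S||T|}[S, T] - σ_{∂_W T}(S)` for all `S ∈ 𝕃(V₀)`. -/
theorem statement5
    {Lc : Type u} [AddCommGroup Lc] [Module ℚ Lc] (G : GLA Lc)
    (V0 V1 W0 W1 Sp : ℤ → Submodule ℚ Lc)
    -- the ambient free Lie algebra is reduced
    (hred : G.Reduced)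
    (hV0 : ∀ i, V0 i ≤ G.grade i) (hV1 : ∀ i, V1 i ≤ G.grade i)
    (hW0 : ∀ i, W0 i ≤ G.grade i) (hW1 : ∀ i, W1 i ≤ G.grade i)
    (hSp : ∀ i, Sp i ≤ G.grade i)
    -- the suspension `s(v ⊗ w)`, bilinear, of degree `|v|+|w|+1`; in `L₁` only
    -- `s(V₀⊗W₀) ⊕ s(V₁⊗W₀) ⊕ s(V₀⊗W₁)` is present
    (sus : Lc →ₗ[ℚ] Lc →ₗ[ℚ] Lc)
    (hsus00 : ∀ {i j : ℤ} {v w : Lc}, v ∈ V0 i → w ∈ W0 j → sus v w ∈ Sp (i + j + 1))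
    (hsus10 : ∀ {i j : ℤ} {v w : Lc}, v ∈ V1 i → w ∈ W0 j → sus v w ∈ Sp (i + j + 1))
    (hsus01 : ∀ {i j : ℤ} {v w : Lc}, v ∈ V0 i → w ∈ W1 j → sus v w ∈ Sp (i + j + 1))
    -- `L₁` is generated by `V ⊕ W ⊕ s(V₀⊗W₀) ⊕ s(V₁⊗W₀) ⊕ s(V₀⊗W₁)`
    (hgen : G.lieSub (fun i => V0 i ⊔ V1 i ⊔ W0 i ⊔ W1 i ⊔ Sp i) = ⊤)
    -- the derivations `σ_A` for homogeneous `A ∈ 𝕃(V ⊕ W)`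
    (sg : ℤ → Lc → (Lc →ₗ[ℚ] Lc))
    (hsg_grade : ∀ {a : ℤ} {A : Lc}, A ∈ G.lieSub (fun i => V0 i ⊔ V1 i ⊔ W0 i ⊔ W1 i) →
      A ∈ G.grade a → ∀ {n : ℤ} {x : Lc}, x ∈ G.grade n → sg a A x ∈ G.grade (n + a + 1))
    (hsg_der : ∀ {a : ℤ} {A : Lc}, A ∈ G.lieSub (fun i => V0 i ⊔ V1 i ⊔ W0 i ⊔ W1 i) →
      A ∈ G.grade a → ∀ {n : ℤ} (x y : Lc), x ∈ G.grade n →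
      sg a A (G.br x y) = G.br (sg a A x) y + (-1 : ℚ) ^ ((a + 1) * n) • G.br x (sg a A y))
    (hsg_vw : ∀ {i j : ℤ} {v w : Lc}, v ∈ V0 i ⊔ V1 i → w ∈ W0 j → sg i v w = sus v w)
    (hsg_vw' : ∀ {i j : ℤ} {v w : Lc}, v ∈ V0 i → w ∈ W1 j → sg i v w = sus v w)
    (hsg_wv : ∀ {i j : ℤ} {v w : Lc}, v ∈ V0 i ⊔ V1 i → w ∈ W0 j →
      sg j w v = (-1 : ℚ) ^ (i * j) • sus v w)
    (hsg_wv' : ∀ {i j : ℤ} {v w : Lc}, v ∈ V0 i → w ∈ W1 j →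
      sg j w v = (-1 : ℚ) ^ (i * j) • sus v w)
    (hsg_vv : ∀ {i i' : ℤ} {v v' : Lc}, v ∈ V0 i ⊔ V1 i → v' ∈ V0 i' ⊔ V1 i' →
      sg i v v' = 0)
    (hsg_ww : ∀ {j j' : ℤ} {w w' : Lc}, w ∈ W0 j ⊔ W1 j → w' ∈ W0 j' ⊔ W1 j' →
      sg j w w' = 0)
    (hsg_vS : ∀ {i k : ℤ} {v x : Lc}, v ∈ V0 i ⊔ V1 i → x ∈ Sp k → sg i v x = 0)
    (hsg_wS : ∀ {j k : ℤ} {w x : Lc}, w ∈ W0 j ⊔ W1 j → x ∈ Sp k → sg j w x = 0)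
    (hsg_Av : ∀ {a : ℤ} {A : Lc}, A ∈ G.lieSub (fun i => V0 i ⊔ V1 i ⊔ W0 i ⊔ W1 i) →
      A ∈ G.grade a → ∀ {i : ℤ} {v : Lc}, v ∈ V0 i ⊔ V1 i →
      sg a A v = (-1 : ℚ) ^ (i * a) • sg i v A)
    (hsg_Aw : ∀ {a : ℤ} {A : Lc}, A ∈ G.lieSub (fun i => V0 i ⊔ V1 i ⊔ W0 i ⊔ W1 i) →
      A ∈ G.grade a → ∀ {j : ℤ} {w : Lc}, w ∈ W0 j ⊔ W1 j →
      sg a A w = (-1 : ℚ) ^ (j * a) • sg j w A)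
    (hsg_AS : ∀ {a : ℤ} {A : Lc}, A ∈ G.lieSub (fun i => V0 i ⊔ V1 i ⊔ W0 i ⊔ W1 i) →
      A ∈ G.grade a → ∀ {k : ℤ} {x : Lc}, x ∈ Sp k → sg a A x = 0)
    -- the degree `-1` derivation `D` of `L₁`
    (D : Lc →ₗ[ℚ] Lc)
    (hD_grade : ∀ {i : ℤ} {x : Lc}, x ∈ G.grade i → D x ∈ G.grade (i - 1))
    (hD_der : ∀ {i : ℤ} (x y : Lc), x ∈ G.grade i →
      D (G.br x y) = G.br (D x) y + (-1 : ℚ) ^ ((-1 : ℤ) * i) • G.br x (D y))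
    -- `D = ∂_V` on `V`, `D = ∂_W` on `W`, with `∂(V₀) = ∂(W₀) = 0`,
    -- `∂(V₁) ⊆ 𝕃(V₀)` and `∂(W₁) ⊆ 𝕃(W₀)`
    (hD_V0 : ∀ {i : ℤ} {v : Lc}, v ∈ V0 i → D v = 0)
    (hD_W0 : ∀ {j : ℤ} {w : Lc}, w ∈ W0 j → D w = 0)
    (hD_V1 : ∀ {i : ℤ} {v : Lc}, v ∈ V1 i → D v ∈ G.lieSub V0)
    (hD_W1 : ∀ {j : ℤ} {w : Lc}, w ∈ W1 j → D w ∈ G.lieSub W0)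
    -- minimality of the two Quillen models
    (hD_V1dec : ∀ {i : ℤ} {v : Lc}, v ∈ V1 i → D v ∈ G.dec)
    (hD_W1dec : ∀ {j : ℤ} {w : Lc}, w ∈ W1 j → D w ∈ G.dec)
    -- the value of `D` on the suspension generators
    (hD_sus00 : ∀ {i j : ℤ} {v w : Lc}, v ∈ V0 i → w ∈ W0 j → D (sus v w) = G.br v w)
    (hD_sus10 : ∀ {i j : ℤ} {v w : Lc}, v ∈ V1 i → w ∈ W0 j →
      D (sus v w) = G.br v w - (-1 : ℚ) ^ ((i + 1) * j) • sg j w (D v))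
    (hD_sus01 : ∀ {i j : ℤ} {v w : Lc}, v ∈ V0 i → w ∈ W1 j →
      D (sus v w) = G.br v w - (-1 : ℚ) ^ i • sg i v (D w))
    -- `(L₁, D)` is a dgl
    (hDD : ∀ x : Lc, D (D x) = 0)
 :
    ∀ {t : ℤ} {T : Lc}, T ∈ G.lieSub (fun j => W0 j ⊔ W1 j) → T ∈ G.grade t →
    ∀ {s : ℤ} {S : Lc}, S ∈ G.lieSub V0 → S ∈ G.grade s →
      (D (sg t T S) - (-1 : ℚ) ^ (t + 1) • sg t T (D S)
          = -(G.br T S) - sg (t - 1) (D T) S) ∧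
      (D (sg t T S) = (-1 : ℚ) ^ (s * t) • G.br S T - sg (t - 1) (D T) S) := by
  classical
  set pVW : ℤ → Submodule ℚ Lc := fun i => V0 i ⊔ V1 i ⊔ W0 i ⊔ W1 i with hpVW_def
  set pW : ℤ → Submodule ℚ Lc := fun j => W0 j ⊔ W1 j with hpW_def
  set pfull : ℤ → Submodule ℚ Lc := fun i => V0 i ⊔ V1 i ⊔ W0 i ⊔ W1 i ⊔ Sp i with hpfull_def
  have hWVW : ∀ j, pW j ≤ pVW j := by
    intro j
    exact sup_le (le_sup_right.trans le_sup_left) le_sup_right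
  have hLWVW : G.lieSub pW ≤ G.lieSub pVW := G.lieSub_mono hWVW
  have hpVWg : ∀ i, pVW i ≤ G.grade i := by
    intro i
    exact sup_le (sup_le (sup_le (hV0 i) (hV1 i)) (hW0 i)) (hW1 i)
  have hpfullg : ∀ i, pfull i ≤ G.grade i := by
    intro i
    exact sup_le (hpVWg i) (hSp i)
  have hVpVW : ∀ i, V0 i ⊔ V1 i ≤ pVW i := by
    intro i
    exact le_sup_left.trans le_sup_left
  -- extensionality for `sg`-type derivations of degree `a`
  have der_ext : ∀ (a : ℤ) (F F' : Lc →ₗ[ℚ] Lc),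
      (∀ {i : ℤ} (x y : Lc), x ∈ G.grade i →
        F (G.br x y) = G.br (F x) y + (-1 : ℚ) ^ ((a + 1) * i) • G.br x (F y)) →
      (∀ {i : ℤ} (x y : Lc), x ∈ G.grade i →
        F' (G.br x y) = G.br (F' x) y + (-1 : ℚ) ^ ((a + 1) * i) • G.br x (F' y)) →
      (∀ i, pfull i ≤ LinearMap.ker (F - F')) → ∀ x, F x = F' x := by
    intro a F F' hder hder' hbase x
    have key : ∀ {i : ℤ} {z : Lc}, z ∈ G.lieSub pfull → z ∈ G.grade i →
        z ∈ G.grade i ⊓ LinearMap.ker (F - F') := by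
      intro i z hzL hzg
      refine G.graded_ind pfull (fun i => G.grade i ⊓ LinearMap.ker (F - F')) ?_ ?_ ?_ hzL hzg
      · intro i
        exact le_inf (hpfullg i) (hbase i)
      · intro i
        exact inf_le_left
      · intro i j z w hzg _ hz hwg _ hw
        refine Submodule.mem_inf.2 ⟨G.br_mem hzg hwg, ?_⟩
        have hz' : F z - F' z = 0 := by
          have := (Submodule.mem_inf.1 hz).2
          simpa [LinearMap.mem_ker, LinearMap.sub_apply, sub_eq_zero] using this
        have hw' : F w - F' w = 0 := by
          have := (Submodule.mem_inf.1 hw).2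
          simpa [LinearMap.mem_ker, LinearMap.sub_apply, sub_eq_zero] using this
        rw [LinearMap.mem_ker, LinearMap.sub_apply, hder z w hzg, hder' z w hzg, sub_eq_zero]
        have hz'' : F z = F' z := sub_eq_zero.mp hz'
        have hw'' : F w = F' w := sub_eq_zero.mp hw'
        rw [hz'', hw'']
    have htop : (⊤ : Submodule ℚ Lc) ≤ LinearMap.ker (F - F') := by
      rw [← G.internal.submodule_iSup_eq_top]
      refine iSup_le ?_
      intro i z hz
      have hzL : z ∈ G.lieSub pfull := by rw [hgen]; trivial
      exact (Submodule.mem_inf.1 (key hzL hz)).2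
    have := htop (Submodule.mem_top (x := x))
    rw [LinearMap.mem_ker, LinearMap.sub_apply, sub_eq_zero] at this
    exact this
  -- additivity and homogeneity of `sg` in the superscript argument
  have sgSmul : ∀ (a : ℤ) (c : ℚ) (A : Lc), A ∈ G.lieSub pVW → A ∈ G.grade a →
      ∀ x, sg a (c • A) x = c • sg a A x := by
    intro a c A hA hAg
    have hcA : c • A ∈ G.lieSub pVW := Submodule.smul_mem _ c hA
    have hcAg : c • A ∈ G.grade a := Submodule.smul_mem _ c hAg
    refine der_ext a (sg a (c • A)) (c • sg a A) ?_ ?_ ?_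
    · intro i x y hxg
      exact hsg_der hcA hcAg x y hxg
    · intro i x y hxg
      simp only [LinearMap.smul_apply]
      rw [hsg_der hA hAg x y hxg]
      simp only [smul_add, map_smul, LinearMap.smul_apply]
      rw [smul_comm c]
    · intro i
      refine sup_le (sup_le (sup_le ?_ ?_) ?_) ?_
      · intro v hv
        rw [LinearMap.mem_ker, LinearMap.sub_apply, sub_eq_zero, LinearMap.smul_apply,
          hsg_Av hcA hcAg hv, hsg_Av hA hAg hv, map_smul]
        rw [smul_comm c]
      · intro w hw
        have hw' : w ∈ W0 i ⊔ W1 i := Submodule.mem_sup_left hw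
        rw [LinearMap.mem_ker, LinearMap.sub_apply, sub_eq_zero, LinearMap.smul_apply,
          hsg_Aw hcA hcAg hw', hsg_Aw hA hAg hw', map_smul]
        rw [smul_comm c]
      · intro w hw
        have hw' : w ∈ W0 i ⊔ W1 i := Submodule.mem_sup_right hw
        rw [LinearMap.mem_ker, LinearMap.sub_apply, sub_eq_zero, LinearMap.smul_apply,
          hsg_Aw hcA hcAg hw', hsg_Aw hA hAg hw', map_smul]
        rw [smul_comm c]
      · intro z hz
        rw [LinearMap.mem_ker, LinearMap.sub_apply, sub_eq_zero, LinearMap.smul_apply,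
          hsg_AS hcA hcAg hz, hsg_AS hA hAg hz, smul_zero]
  have sgAdd : ∀ (a : ℤ) (A1 A2 : Lc), A1 ∈ G.lieSub pVW → A1 ∈ G.grade a →
      A2 ∈ G.lieSub pVW → A2 ∈ G.grade a →
      ∀ x, sg a (A1 + A2) x = sg a A1 x + sg a A2 x := by
    intro a A1 A2 hA1 hA1g hA2 hA2g
    have hA : A1 + A2 ∈ G.lieSub pVW := Submodule.add_mem _ hA1 hA2
    have hAg : A1 + A2 ∈ G.grade a := Submodule.add_mem _ hA1g hA2g
    refine der_ext a (sg a (A1 + A2)) (sg a A1 + sg a A2) ?_ ?_ ?_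
    · intro i x y hxg
      exact hsg_der hA hAg x y hxg
    · intro i x y hxg
      simp only [LinearMap.add_apply]
      rw [hsg_der hA1 hA1g x y hxg, hsg_der hA2 hA2g x y hxg]
      simp only [map_add, LinearMap.add_apply, smul_add]
      abel
    · intro i
      refine sup_le (sup_le (sup_le ?_ ?_) ?_) ?_
      · intro v hv
        rw [LinearMap.mem_ker, LinearMap.sub_apply, sub_eq_zero, LinearMap.add_apply,
          hsg_Av hA hAg hv, hsg_Av hA1 hA1g hv, hsg_Av hA2 hA2g hv, map_add, smul_add]
      · intro w hw
        have hw' : w ∈ W0 i ⊔ W1 i := Submodule.mem_sup_left hw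
        rw [LinearMap.mem_ker, LinearMap.sub_apply, sub_eq_zero, LinearMap.add_apply,
          hsg_Aw hA hAg hw', hsg_Aw hA1 hA1g hw', hsg_Aw hA2 hA2g hw', map_add, smul_add]
      · intro w hw
        have hw' : w ∈ W0 i ⊔ W1 i := Submodule.mem_sup_right hw
        rw [LinearMap.mem_ker, LinearMap.sub_apply, sub_eq_zero, LinearMap.add_apply,
          hsg_Aw hA hAg hw', hsg_Aw hA1 hA1g hw', hsg_Aw hA2 hA2g hw', map_add, smul_add]
      · intro z hz
        rw [LinearMap.mem_ker, LinearMap.sub_apply, sub_eq_zero, LinearMap.add_apply,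
          hsg_AS hA hAg hz, hsg_AS hA1 hA1g hz, hsg_AS hA2 hA2g hz, add_zero]
  have sgZero : ∀ (a : ℤ) (x : Lc), sg a 0 x = 0 := by
    intro a x
    have h0 : (0 : Lc) ∈ G.lieSub pVW := Submodule.zero_mem _
    have h0g : (0 : Lc) ∈ G.grade a := Submodule.zero_mem _
    have := sgSmul a 0 0 h0 h0g x
    rw [zero_smul, zero_smul] at this
    exact this
  -- `D` vanishes on `𝕃(V₀)` (homogeneous elements)
  have hDV0' : ∀ {s : ℤ} {S : Lc}, S ∈ G.lieSub V0 → S ∈ G.grade s → D S = 0 := by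
    intro s S hS hSg
    have key := G.graded_ind V0 (fun i => G.grade i ⊓ LinearMap.ker D) ?_ ?_ ?_ hS hSg
    · exact (Submodule.mem_inf.1 key).2
    · intro i
      exact le_inf (hV0 i) (fun v hv => LinearMap.mem_ker.2 (hD_V0 hv))
    · intro i
      exact inf_le_left
    · intro i j z w hzg _ hz hwg _ hw
      refine Submodule.mem_inf.2 ⟨G.br_mem hzg hwg, LinearMap.mem_ker.2 ?_⟩
      have hDz : D z = 0 := (Submodule.mem_inf.1 hz).2
      have hDw : D w = 0 := (Submodule.mem_inf.1 hw).2
      rw [hD_der z w hzg, hDz, hDw]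
      simp
  -- `D` preserves `𝕃(W)`
  have hDW : ∀ {t : ℤ} {T : Lc}, T ∈ G.lieSub pW → T ∈ G.grade t → D T ∈ G.lieSub pW := by
    intro t T hT hTg
    have key := G.graded_ind pW (fun j => G.grade j ⊓ Submodule.comap D (G.lieSub pW))
      ?_ ?_ ?_ hT hTg
    · exact (Submodule.mem_inf.1 key).2
    · intro j
      refine sup_le (le_inf (hW0 j) ?_) (le_inf (hW1 j) ?_)
      · intro w hw
        rw [Submodule.mem_comap, hD_W0 hw]
        exact Submodule.zero_mem _
      · intro w hw
        rw [Submodule.mem_comap]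
        exact G.lieSub_mono (fun k => (le_sup_left : W0 k ≤ W0 k ⊔ W1 k)) (hD_W1 hw)
    · intro j
      exact inf_le_left
    · intro i j z w hzg hzL hz hwg hwL hw
      refine Submodule.mem_inf.2 ⟨G.br_mem hzg hwg, Submodule.mem_comap.2 ?_⟩
      rw [hD_der z w hzg]
      exact Submodule.add_mem _ (G.lieSub_br (Submodule.mem_comap.1 (Submodule.mem_inf.1 hz).2) hwL)
        (Submodule.smul_mem _ _ (G.lieSub_br hzL (Submodule.mem_comap.1 (Submodule.mem_inf.1 hw).2)))
  -- inner induction: if the identity holds on the generators `V₀` it holds on `𝕃(V₀)`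
  have inner : ∀ (t : ℤ) (T : Lc), T ∈ G.lieSub pVW → T ∈ G.grade t →
      D T ∈ G.lieSub pVW →
      (∀ (i : ℤ) (v : Lc), v ∈ V0 i →
        D (sg t T v) + G.br T v + sg (t - 1) (D T) v = 0) →
      ∀ {s : ℤ} {S : Lc}, S ∈ G.lieSub V0 → S ∈ G.grade s →
        D (sg t T S) + G.br T S + sg (t - 1) (D T) S = 0 := by
    intro t T hT hTg hDT hbase s S hS hSg
    have hDTg : D T ∈ G.grade (t - 1) := by
      have := hD_grade hTg
      exact this
    set F : Lc →ₗ[ℚ] Lc := D ∘ₗ sg t T + (G.br T + sg (t - 1) (D T)) with hF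
    have hFz : ∀ z, F z = D (sg t T z) + G.br T z + sg (t - 1) (D T) z := by
      intro z
      simp [hF, add_assoc]
    have key := G.graded_ind V0 (fun s => G.grade s ⊓ LinearMap.ker F) ?_ ?_ ?_ hS hSg
    · have hker := (Submodule.mem_inf.1 key).2
      rw [LinearMap.mem_ker, hFz] at hker
      exact hker
    · intro i
      refine le_inf (hV0 i) (fun v hv => LinearMap.mem_ker.2 ?_)
      rw [hFz]
      exact hbase i v hv
    · intro i
      exact inf_le_left
    · intro i j x y hxg hxL hx hyg hyL hy
      refine Submodule.mem_inf.2 ⟨G.br_mem hxg hyg, LinearMap.mem_ker.2 ?_⟩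
      have hDx : D x = 0 := hDV0' hxL hxg
      have hDy : D y = 0 := hDV0' hyL hyg
      have hx0 : D (sg t T x) = -(G.br T x + sg (t - 1) (D T) x) := by
        have h1 := (Submodule.mem_inf.1 hx).2
        rw [LinearMap.mem_ker, hFz, add_assoc] at h1
        exact eq_neg_of_add_eq_zero_left h1
      have hy0 : D (sg t T y) = -(G.br T y + sg (t - 1) (D T) y) := by
        have h1 := (Submodule.mem_inf.1 hy).2
        rw [LinearMap.mem_ker, hFz, add_assoc] at h1
        exact eq_neg_of_add_eq_zero_left h1
      rw [hFz, hsg_der hT hTg x y hxg, map_add, hD_der (sg t T x) y (hsg_grade hT hTg hxg),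
        map_smul, hD_der x (sg t T y) hxg, hDy, hDx, hx0, hy0, G.jacobi y hTg hxg,
        hsg_der hDT hDTg x y hxg]
      have e2 : (t - 1 + 1) * i = t * i := by ring
      rw [e2]
      have e1 : ∀ z : Lc, ((-1 : ℚ) ^ ((t + 1) * i)) • (((-1 : ℚ) ^ ((-1 : ℤ) * i)) • z)
          = ((-1 : ℚ) ^ (t * i)) • z := by
        intro z
        rw [smul_smul, upow_mul_upow, show (t + 1) * i + -1 * i = t * i by ring]
      simp only [map_zero, map_add, map_neg, smul_zero, add_zero, zero_add, smul_add, smul_neg,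
        LinearMap.map_zero₂, LinearMap.neg_apply, LinearMap.add_apply, LinearMap.zero_apply, e1]
      module
  have hV0VW : ∀ i, V0 i ≤ pVW i := fun i => (le_sup_left : V0 i ≤ V0 i ⊔ V1 i).trans (hVpVW i)
  have hW0VW : G.lieSub W0 ≤ G.lieSub pVW :=
    G.lieSub_mono (fun k => (le_sup_left : W0 k ≤ W0 k ⊔ W1 k).trans (hWVW k))
  have sgAv_rev : ∀ {a : ℤ} {A : Lc}, A ∈ G.lieSub pVW → A ∈ G.grade a →
      ∀ {i : ℤ} {v : Lc}, v ∈ V0 i ⊔ V1 i → sg i v A = ((-1 : ℚ) ^ (i * a)) • sg a A v := by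
    intro a A hA hAg i v hv
    rw [hsg_Av hA hAg hv, smul_smul, upow_sq, one_smul]
  -- base case: `T` a generator in `W₀`
  have baseW0 : ∀ (j : ℤ) (w : Lc), w ∈ W0 j → ∀ (i : ℤ) (v : Lc), v ∈ V0 i →
      D (sg j w v) + G.br w v + sg (j - 1) (D w) v = 0 := by
    intro j w hw i v hv
    have hv' : v ∈ V0 i ⊔ V1 i := Submodule.mem_sup_left hv
    rw [hsg_wv hv' hw, map_smul, hD_sus00 hv hw, hD_W0 hw, sgZero,
      G.antisymm (hW0 j hw) (hV0 i hv), show j * i = i * j by ring]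
    simp
  -- base case: `T` a generator in `W₁`
  have baseW1 : ∀ (j : ℤ) (w : Lc), w ∈ W1 j → ∀ (i : ℤ) (v : Lc), v ∈ V0 i →
      D (sg j w v) + G.br w v + sg (j - 1) (D w) v = 0 := by
    intro j w hw i v hv
    have hv' : v ∈ V0 i ⊔ V1 i := Submodule.mem_sup_left hv
    have hDw : D w ∈ G.lieSub pVW := hW0VW (hD_W1 hw)
    have hDwg : D w ∈ G.grade (j - 1) := hD_grade (hW1 j hw)
    rw [hsg_wv' hv hw, map_smul, hD_sus01 hv hw, hsg_Av hDw hDwg hv',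
      G.antisymm (hW1 j hw) (hV0 i hv), show j * i = i * j by ring]
    have c1 : ((-1 : ℚ) ^ (i * (j - 1))) = (-1 : ℚ) ^ (i * j) * (-1 : ℚ) ^ (i : ℤ) := by
      rw [upow_mul_upow]
      exact upow_congr (-i) (by ring)
    rw [c1]
    simp only [smul_sub, smul_smul]
    module
  -- splitting `σ_{[B₁,B₂]}` on a generator `v ∈ V₀`
  have split : ∀ (b1 b2 : ℤ) (B1 B2 : Lc), B1 ∈ G.lieSub pVW → B1 ∈ G.grade b1 →
      B2 ∈ G.lieSub pVW → B2 ∈ G.grade b2 → ∀ (i : ℤ) (v : Lc), v ∈ V0 i →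
      sg (b1 + b2) (G.br B1 B2) v = ((-1 : ℚ) ^ (i * b2)) • G.br (sg b1 B1 v) B2
        + ((-1 : ℚ) ^ b1) • G.br B1 (sg b2 B2 v) := by
    intro b1 b2 B1 B2 hB1 hB1g hB2 hB2g i v hv
    have hv' : v ∈ V0 i ⊔ V1 i := Submodule.mem_sup_left hv
    have hvVW : v ∈ G.lieSub pVW := G.le_lieSub pVW i (hV0VW i hv)
    have hvg : v ∈ G.grade i := hV0 i hv
    have hbrVW : G.br B1 B2 ∈ G.lieSub pVW := G.lieSub_br hB1 hB2
    have hbrg : G.br B1 B2 ∈ G.grade (b1 + b2) := G.br_mem hB1g hB2g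
    rw [hsg_Av hbrVW hbrg hv', hsg_der hvVW hvg B1 B2 hB1g, sgAv_rev hB1 hB1g hv',
      sgAv_rev hB2 hB2g hv']
    simp only [LinearMap.map_smul₂, map_smul, LinearMap.smul_apply, smul_add, smul_smul,
      upow_mul_upow]
    have c1 : i * (b1 + b2) + i * b1 = i * b2 + 2 * (i * b1) := by ring
    have c2 : i * (b1 + b2) + ((i + 1) * b1 + i * b2) = b1 + 2 * (i * b1 + i * b2) := by ring
    rw [upow_congr _ c1, upow_congr _ c2]
  -- base case for a bracket of two elements of `𝕃(W)`
  have baseBr : ∀ (t1 t2 : ℤ) (T1 T2 : Lc), T1 ∈ G.lieSub pW → T1 ∈ G.grade t1 →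
      T2 ∈ G.lieSub pW → T2 ∈ G.grade t2 →
      (∀ (s : ℤ) (S : Lc), S ∈ G.lieSub V0 → S ∈ G.grade s →
        D (sg t1 T1 S) + G.br T1 S + sg (t1 - 1) (D T1) S = 0) →
      (∀ (s : ℤ) (S : Lc), S ∈ G.lieSub V0 → S ∈ G.grade s →
        D (sg t2 T2 S) + G.br T2 S + sg (t2 - 1) (D T2) S = 0) →
      ∀ (i : ℤ) (v : Lc), v ∈ V0 i →
        D (sg (t1 + t2) (G.br T1 T2) v) + G.br (G.br T1 T2) v
          + sg (t1 + t2 - 1) (D (G.br T1 T2)) v = 0 := by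
    intro t1 t2 T1 T2 hT1 hT1g hT2 hT2g hC1 hC2 i v hv
    have hvg : v ∈ G.grade i := hV0 i hv
    have hvL : v ∈ G.lieSub V0 := G.le_lieSub V0 i hv
    have hT1VW : T1 ∈ G.lieSub pVW := hLWVW hT1
    have hT2VW : T2 ∈ G.lieSub pVW := hLWVW hT2
    have hDT1VW : D T1 ∈ G.lieSub pVW := hLWVW (hDW hT1 hT1g)
    have hDT2VW : D T2 ∈ G.lieSub pVW := hLWVW (hDW hT2 hT2g)
    have hDT1g : D T1 ∈ G.grade (t1 - 1) := hD_grade hT1g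
    have hDT2g : D T2 ∈ G.grade (t2 - 1) := hD_grade hT2g
    have hC1v : D (sg t1 T1 v) = -(G.br T1 v + sg (t1 - 1) (D T1) v) := by
      have h1 := hC1 i v hvL hvg
      rw [add_assoc] at h1
      exact eq_neg_of_add_eq_zero_left h1
    have hC2v : D (sg t2 T2 v) = -(G.br T2 v + sg (t2 - 1) (D T2) v) := by
      have h1 := hC2 i v hvL hvg
      rw [add_assoc] at h1
      exact eq_neg_of_add_eq_zero_left h1
    have hσ1g : sg t1 T1 v ∈ G.grade (i + t1 + 1) := hsg_grade hT1VW hT1g hvg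
    -- the jacobi rearrangement
    have hAv : G.br (G.br T1 T2) v
        = G.br T1 (G.br T2 v) - ((-1 : ℚ) ^ (t1 * t2)) • G.br T2 (G.br T1 v) := by
      have h1 := G.jacobi v hT1g hT2g
      rw [h1]
      abel
    have hanti : G.br (G.br T1 v) T2 = -(((-1 : ℚ) ^ ((t1 + i) * t2)) • G.br T2 (G.br T1 v)) :=
      G.antisymm (G.br_mem hT1g hvg) hT2g
    -- the two pieces of `σ_{D[T1,T2]} v`
    have hS1 : sg (t1 + t2 - 1) (G.br (D T1) T2) v
        = ((-1 : ℚ) ^ (i * t2)) • G.br (sg (t1 - 1) (D T1) v) T2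
          + ((-1 : ℚ) ^ (t1 - 1)) • G.br (D T1) (sg t2 T2 v) := by
      have h := split (t1 - 1) t2 (D T1) T2 hDT1VW hDT1g hT2VW hT2g i v hv
      rw [show t1 + t2 - 1 = t1 - 1 + t2 from by ring]
      exact h
    have hS2 : sg (t1 + t2 - 1) (G.br T1 (D T2)) v
        = ((-1 : ℚ) ^ (i * (t2 - 1))) • G.br (sg t1 T1 v) (D T2)
          + ((-1 : ℚ) ^ t1) • G.br T1 (sg (t2 - 1) (D T2) v) := by
      have h := split t1 (t2 - 1) T1 (D T2) hT1VW hT1g hDT2VW hDT2g i v hv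
      rw [show t1 + t2 - 1 = t1 + (t2 - 1) from by ring]
      exact h
    have hm1 : G.br (D T1) T2 ∈ G.lieSub pVW := G.lieSub_br hDT1VW hT2VW
    have hm1g : G.br (D T1) T2 ∈ G.grade (t1 + t2 - 1) := by
      have := G.br_mem hDT1g hT2g
      rwa [show t1 - 1 + t2 = t1 + t2 - 1 from by ring] at this
    have hm3 : G.br T1 (D T2) ∈ G.lieSub pVW := G.lieSub_br hT1VW hDT2VW
    have hm3g : G.br T1 (D T2) ∈ G.grade (t1 + t2 - 1) := by
      have := G.br_mem hT1g hDT2g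
      rwa [show t1 + (t2 - 1) = t1 + t2 - 1 from by ring] at this
    have hsum : sg (t1 + t2 - 1)
        (G.br (D T1) T2 + ((-1 : ℚ) ^ ((-1 : ℤ) * t1)) • G.br T1 (D T2)) v
        = sg (t1 + t2 - 1) (G.br (D T1) T2) v
          + ((-1 : ℚ) ^ ((-1 : ℤ) * t1)) • sg (t1 + t2 - 1) (G.br T1 (D T2)) v := by
      rw [sgAdd (t1 + t2 - 1) _ _ hm1 hm1g
        (Submodule.smul_mem _ _ hm3) (Submodule.smul_mem _ _ hm3g),
        sgSmul (t1 + t2 - 1) _ _ hm3 hm3g]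
    -- now expand everything
    rw [split t1 t2 T1 T2 hT1VW hT1g hT2VW hT2g i v hv, map_add, map_smul, map_smul,
      hD_der (sg t1 T1 v) T2 hσ1g, hD_der T1 (sg t2 T2 v) hT1g, hC1v, hC2v,
      hD_der T1 T2 hT1g, hsum, hS1, hS2, hAv]
    simp only [map_add, map_neg, LinearMap.map_smul₂, map_smul, LinearMap.smul_apply,
      LinearMap.add_apply, LinearMap.neg_apply, smul_add, smul_neg, smul_smul, smul_sub,
      upow_mul_upow]
    rw [hanti]
    simp only [smul_neg, smul_smul, upow_mul_upow]
    match_scalars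
    · rw [upow_congr (i * t2) (show i * t2 + (t1 + i) * t2 = t1 * t2 + 2 * (i * t2) by ring)]
      ring
    · ring
    · rw [upow_congr_neg (-1)
        (show i * t2 + -1 * (i + t1 + 1) = -1 * t1 + i * (t2 - 1) + (2 * (-1) + 1) by ring)]
      ring
    · rw [upow_congr_neg (-1) (show t1 - 1 = t1 + (2 * (-1) + 1) by ring)]
      ring
    · rw [show t1 + -1 * t1 = (0 : ℤ) by ring, zpow_zero]
      ring
    · rw [show t1 + -1 * t1 = (0 : ℤ) by ring, show -1 * t1 + t1 = (0 : ℤ) by ring, zpow_zero]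
      ring
  -- the main outer induction over `T ∈ 𝕃(W)`
  have main : ∀ {t : ℤ} {T : Lc}, T ∈ G.lieSub pW → T ∈ G.grade t →
      ∀ (s : ℤ) (S : Lc), S ∈ G.lieSub V0 → S ∈ G.grade s →
      D (sg t T S) + G.br T S + sg (t - 1) (D T) S = 0 := by
    intro t T hT hTg
    have key := G.graded_ind pW (fun t =>
      { carrier := {T | T ∈ G.grade t ∧ T ∈ G.lieSub pW ∧ ∀ (s : ℤ) (S : Lc),
          S ∈ G.lieSub V0 → S ∈ G.grade s →
          D (sg t T S) + G.br T S + sg (t - 1) (D T) S = 0}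
        add_mem' := ?_
        zero_mem' := ?_
        smul_mem' := ?_ }) ?_ ?_ ?_ hT hTg
    · exact key.2.2
    · -- add_mem'
      rintro a b ⟨hag, haL, haC⟩ ⟨hbg, hbL, hbC⟩
      refine ⟨Submodule.add_mem _ hag hbg, Submodule.add_mem _ haL hbL, ?_⟩
      intro s S hS hSg
      have haVW : a ∈ G.lieSub pVW := hLWVW haL
      have hbVW : b ∈ G.lieSub pVW := hLWVW hbL
      have hDaVW : D a ∈ G.lieSub pVW := hLWVW (hDW haL hag)
      have hDbVW : D b ∈ G.lieSub pVW := hLWVW (hDW hbL hbg)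
      have h1 : D (sg t a S) = -(G.br a S + sg (t - 1) (D a) S) := by
        have h := haC s S hS hSg
        rw [add_assoc] at h
        exact eq_neg_of_add_eq_zero_left h
      have h2 : D (sg t b S) = -(G.br b S + sg (t - 1) (D b) S) := by
        have h := hbC s S hS hSg
        rw [add_assoc] at h
        exact eq_neg_of_add_eq_zero_left h
      rw [sgAdd t a b haVW hag hbVW hbg S, map_add, h1, h2, map_add D a b,
        sgAdd (t - 1) (D a) (D b) hDaVW (hD_grade hag) hDbVW (hD_grade hbg) S,
        LinearMap.map_add₂]
      abel
    · -- zero_mem'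
      refine ⟨Submodule.zero_mem _, Submodule.zero_mem _, ?_⟩
      intro s S hS hSg
      rw [sgZero, map_zero, map_zero, sgZero]
      simp
    · -- smul_mem'
      rintro c a ⟨hag, haL, haC⟩
      refine ⟨Submodule.smul_mem _ _ hag, Submodule.smul_mem _ _ haL, ?_⟩
      intro s S hS hSg
      have haVW : a ∈ G.lieSub pVW := hLWVW haL
      have hDaVW : D a ∈ G.lieSub pVW := hLWVW (hDW haL hag)
      have h1 : D (sg t a S) = -(G.br a S + sg (t - 1) (D a) S) := by
        have h := haC s S hS hSg
        rw [add_assoc] at h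
        exact eq_neg_of_add_eq_zero_left h
      rw [sgSmul t c a haVW hag S, map_smul, h1, map_smul D,
        sgSmul (t - 1) c (D a) hDaVW (hD_grade hag) S, LinearMap.map_smul₂]
      simp only [smul_add, smul_neg]
      abel
    · -- generators
      intro j
      refine sup_le ?_ ?_
      · intro w hw
        refine ⟨hW0 j hw, G.le_lieSub pW j (Submodule.mem_sup_left hw), ?_⟩
        intro s S hS hSg
        refine inner j w (G.le_lieSub pVW j (hWVW j (Submodule.mem_sup_left hw)))
          (hW0 j hw) ?_ (baseW0 j w hw) hS hSg
        rw [hD_W0 hw]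
        exact Submodule.zero_mem _
      · intro w hw
        refine ⟨hW1 j hw, G.le_lieSub pW j (Submodule.mem_sup_right hw), ?_⟩
        intro s S hS hSg
        exact inner j w (G.le_lieSub pVW j (hWVW j (Submodule.mem_sup_right hw)))
          (hW1 j hw) (hW0VW (hD_W1 hw)) (baseW1 j w hw) hS hSg
    · -- N ≤ grade
      intro j T hT
      exact hT.1
    · -- brackets
      intro t1 t2 T1 T2 hT1g hT1L hT1N hT2g hT2L hT2N
      have hbrL : G.br T1 T2 ∈ G.lieSub pW := G.lieSub_br hT1L hT2L
      have hbrg : G.br T1 T2 ∈ G.grade (t1 + t2) := G.br_mem hT1g hT2g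
      refine ⟨hbrg, hbrL, ?_⟩
      intro s S hS hSg
      exact inner (t1 + t2) (G.br T1 T2) (hLWVW hbrL) hbrg (hLWVW (hDW hbrL hbrg))
        (baseBr t1 t2 T1 T2 hT1L hT1g hT2L hT2g hT1N.2.2 hT2N.2.2) hS hSg
  -- final assembly
  intro t T hT hTg s S hS hSg
  have hmain := main hT hTg s S hS hSg
  have h2 : D (sg t T S) = -(G.br T S + sg (t - 1) (D T) S) := by
    rw [add_assoc] at hmain
    exact eq_neg_of_add_eq_zero_left hmain
  have hDS : D S = 0 := hDV0' hS hSg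
  constructor
  · rw [hDS, map_zero, smul_zero, sub_zero, h2]
    abel
  · rw [h2, G.antisymm hTg hSg, show t * s = s * t from by ring]
    module
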